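/- arXiv:1910.09635 — 2 statements merged into one kernel-verified Lean document; each statement's English description precedes it below -/
import Mathlib

section
/- The meromorphic family of homogeneous distributions x₊^s on ℝ (equal to max(x,0)^s for Re s > −1 and extended meromorphically) has simple poles exactly at s = −1, −2, −3, …, with residue at s = −k equal to (−1)^{k−1} δ₀^{(k−1)} / (k−1)!, where δ₀^{(j)} is the j-th derivative of the Dirac delta at 0. -/
open Real Filter MeasureTheory
open Set

-- Taylor coefficient and remainder
private noncomputable def tc (φ : ℝ → ℝ) (i : ℕ) : ℝ := iteratedDeriv i φ 0 / (Nat.factorial i : ℝ)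

private noncomputable def tg (φ : ℝ → ℝ) (k : ℕ) (x : ℝ) : ℝ :=
  φ x - ∑ i ∈ Finset.range k, tc φ i * x ^ i

private lemma iterWithin_eq {φ : ℝ → ℝ} (hφ : ContDiff ℝ (⊤ : ℕ∞) φ) (i : ℕ) {y : ℝ}
    (hy : y ∈ Icc (0:ℝ) 1) : iteratedDerivWithin i φ (Icc 0 1) y = iteratedDeriv i φ y := by
  have h1 : ContDiff ℝ ((i : ℕ∞) : WithTop ℕ∞) φ := hφ.of_le (by exact_mod_cast le_top)
  have H := contDiff_iff_ftaylorSeries.mp h1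
  have H2 : HasFTaylorSeriesUpToOn (i : ℕ∞) φ (ftaylorSeries ℝ φ) (Icc 0 1) :=
    (hasFTaylorSeriesUpToOn_univ_iff.mpr H).mono (subset_univ _)
  have h3 := H2.eq_iteratedFDerivWithin_of_uniqueDiffOn (m := i) (by exact_mod_cast le_rfl)
    (uniqueDiffOn_Icc one_pos) hy
  rw [iteratedDerivWithin_eq_iteratedFDerivWithin, ← h3]
  rfl

private lemma tbound {φ : ℝ → ℝ} (hφ : ContDiff ℝ (⊤ : ℕ∞) φ) (hsupp : HasCompactSupport φ)
    {k : ℕ} (hk : 1 ≤ k) :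
    ∃ C : ℝ, 0 ≤ C ∧ ∀ x ∈ Icc (0:ℝ) 1, |tg φ k x| ≤ C * x ^ k := by
  obtain ⟨M, hM⟩ := (hsupp.iteratedFDeriv k).exists_bound_of_continuous
    ((hφ.of_le (by exact_mod_cast le_top) : ContDiff ℝ ((k:ℕ∞) : WithTop ℕ∞) φ).continuous_iteratedFDeriv
      (by exact_mod_cast le_rfl))
  have hM' : ∀ y ∈ Icc (0:ℝ) 1, ‖iteratedDerivWithin k φ (Icc 0 1) y‖ ≤ M := by
    intro y hy
    rw [iterWithin_eq hφ k hy, ← norm_iteratedFDeriv_eq_norm_iteratedDeriv]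
    exact hM y
  have hM0 : 0 ≤ M := le_trans (norm_nonneg _) (hM 0)
  refine ⟨M / (Nat.factorial (k-1) : ℝ), by positivity, fun x hx => ?_⟩
  have hkk : k - 1 + 1 = k := Nat.succ_pred_eq_of_pos hk
  have hcd : ContDiffOn ℝ (↑(k - 1 + 1)) φ (Icc 0 1) := (hφ.of_le (by rw [← WithTop.coe_natCast]; exact WithTop.coe_le_coe.mpr le_top)).contDiffOn
  have := taylor_mean_remainder_bound (f := φ) (a := 0) (b := 1) (C := M) (n := k - 1)
    zero_le_one hcd hx (fun y hy => by rw [hkk]; exact hM' y hy)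
  have htay : taylorWithinEval φ (k-1) (Icc 0 1) 0 x = ∑ i ∈ Finset.range k, tc φ i * x ^ i := by
    rw [taylor_within_apply, ← hkk]
    refine Finset.sum_congr rfl fun i hi => ?_
    rw [iterWithin_eq hφ i (left_mem_Icc.mpr zero_le_one)]
    simp only [tc, smul_eq_mul, sub_zero]
    ring
  rw [Real.norm_eq_abs] at this
  rw [show tg φ k x = φ x - ∑ i ∈ Finset.range k, tc φ i * x ^ i from rfl, ← htay]
  calc |φ x - taylorWithinEval φ (k-1) (Icc 0 1) 0 x| ≤ M * (x - 0) ^ (k-1+1) / (Nat.factorial (k-1) : ℝ) := this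
    _ = M / (Nat.factorial (k-1) : ℝ) * x ^ k := by rw [hkk, sub_zero]; ring

private lemma tg_cont {φ : ℝ → ℝ} (hφ : ContDiff ℝ (⊤ : ℕ∞) φ) (k : ℕ) : Continuous (tg φ k) :=
  hφ.continuous.sub (continuous_finset_sum _ fun i _ => continuous_const.mul (continuous_pow i))

private lemma contOn_rpow_mul {f : ℝ → ℝ} (hf : Continuous f) (s : ℝ) {t : Set ℝ}
    (ht : ∀ x ∈ t, (0:ℝ) < x) : ContinuousOn (fun x : ℝ => x ^ s * f x) t :=
  fun x hx => ((Real.continuousAt_rpow_const x s (Or.inl (ht x hx).ne')).mul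
    hf.continuousAt).continuousWithinAt

private lemma Abound {φ : ℝ → ℝ} (hφ : ContDiff ℝ (⊤ : ℕ∞) φ) (hsupp : HasCompactSupport φ)
    {k : ℕ} (hk : 1 ≤ k) :
    ∃ CA : ℝ, ∀ s ∈ Ioo (-(k:ℝ) - 2⁻¹) (-(k:ℝ)),
      IntegrableOn (fun x : ℝ => x ^ s * tg φ k x) (Ioc 0 1) ∧
      |∫ x in Ioc (0:ℝ) 1, x ^ s * tg φ k x| ≤ CA := by
  obtain ⟨C, hC0, hC⟩ := tbound hφ hsupp hk
  have hhalf : IntegrableOn (fun x : ℝ => C * x ^ (-2⁻¹ : ℝ)) (Ioc 0 1) := by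
    have h1 : IntervalIntegrable (fun x : ℝ => x ^ (-2⁻¹ : ℝ)) volume 0 1 :=
      intervalIntegral.intervalIntegrable_rpow' (by norm_num)
    rw [intervalIntegrable_iff_integrableOn_Ioc_of_le zero_le_one] at h1
    exact h1.const_mul C
  refine ⟨∫ x in Ioc (0:ℝ) 1, C * x ^ (-2⁻¹ : ℝ), fun s hs => ?_⟩
  have key : ∀ᵐ x ∂(volume.restrict (Ioc (0:ℝ) 1)),
      ‖x ^ s * tg φ k x‖ ≤ C * x ^ (-2⁻¹ : ℝ) := by
    rw [ae_restrict_iff' measurableSet_Ioc]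
    filter_upwards with x hx
    have hx0 : (0:ℝ) < x := hx.1
    have h1 : ‖x ^ s * tg φ k x‖ ≤ x ^ s * (C * x ^ k) := by
      rw [Real.norm_eq_abs, abs_mul, abs_of_pos (rpow_pos_of_pos hx0 s)]
      exact mul_le_mul_of_nonneg_left (hC x ⟨hx0.le, hx.2⟩) (rpow_pos_of_pos hx0 s).le
    refine h1.trans ?_
    have h2 : x ^ s * (C * x ^ k) = C * x ^ (s + k) := by
      rw [rpow_add hx0, rpow_natCast]; ring
    rw [h2]
    refine mul_le_mul_of_nonneg_left ?_ hC0
    exact rpow_le_rpow_of_exponent_ge hx0 hx.2 (by linarith [hs.1])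
  have hint : IntegrableOn (fun x : ℝ => x ^ s * tg φ k x) (Ioc 0 1) :=
    hhalf.mono' ((contOn_rpow_mul (tg_cont hφ k) s (fun x hx => hx.1)).aestronglyMeasurable
      measurableSet_Ioc) key
  exact ⟨hint, norm_integral_le_of_norm_le hhalf key⟩


private lemma Bbound {φ : ℝ → ℝ} (hφ : ContDiff ℝ (⊤ : ℕ∞) φ) (hsupp : HasCompactSupport φ) :
    ∃ CB : ℝ, ∀ s : ℝ, s ≤ 0 →
      IntegrableOn (fun x : ℝ => x ^ s * φ x) (Ioi 1) ∧
      |∫ x in Ioi (1:ℝ), x ^ s * φ x| ≤ CB := by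
  have hφint : IntegrableOn (fun x : ℝ => |φ x|) (Ioi 1) :=
    ((hφ.continuous.integrable_of_hasCompactSupport hsupp).abs).integrableOn
  refine ⟨∫ x in Ioi (1:ℝ), |φ x|, fun s hs => ?_⟩
  have key : ∀ᵐ x ∂(volume.restrict (Ioi (1:ℝ))), ‖x ^ s * φ x‖ ≤ |φ x| := by
    rw [ae_restrict_iff' measurableSet_Ioi]
    filter_upwards with x hx
    rw [Real.norm_eq_abs, abs_mul, abs_of_pos (rpow_pos_of_pos (by linarith [mem_Ioi.mp hx]) s)]
    calc x ^ s * |φ x| ≤ 1 * |φ x| := by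
          refine mul_le_mul_of_nonneg_right ?_ (abs_nonneg _)
          exact rpow_le_one_of_one_le_of_nonpos (le_of_lt (mem_Ioi.mp hx)) hs
      _ = |φ x| := one_mul _
  have hint : IntegrableOn (fun x : ℝ => x ^ s * φ x) (Ioi 1) :=
    hφint.mono' ((contOn_rpow_mul hφ.continuous s
      (fun x hx => lt_trans one_pos (mem_Ioi.mp hx))).aestronglyMeasurable measurableSet_Ioi) key
  exact ⟨hint, norm_integral_le_of_norm_le hφint key⟩

private lemma powInt {k : ℕ} {s : ℝ} (hs : s < -(k:ℝ)) {i : ℕ} (hi : i < k) :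
    IntegrableOn (fun x : ℝ => x ^ s * x ^ i) (Ioi 1) ∧
    ∫ x in Ioi (1:ℝ), x ^ s * x ^ i = -1 / (s + i + 1) := by
  have hik : (i:ℝ) + 1 ≤ (k:ℝ) := by exact_mod_cast hi
  have hlt : s + (i:ℝ) < -1 := by linarith
  have heq : EqOn (fun x : ℝ => x ^ (s + (i:ℝ))) (fun x : ℝ => x ^ s * x ^ i) (Ioi 1) := by
    intro x hx
    have hx0 : (0:ℝ) < x := lt_trans one_pos (mem_Ioi.mp hx)
    simp only
    rw [rpow_add hx0, rpow_natCast]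
  constructor
  · exact ((integrableOn_Ioi_rpow_of_lt hlt one_pos).congr_fun heq measurableSet_Ioi)
  · rw [← setIntegral_congr_fun measurableSet_Ioi heq, integral_Ioi_rpow_of_lt hlt one_pos,
      one_rpow]

/-- The regularized pairing `⟨x₊^s, φ dx⟩` valid for `−k−1 < s < −k`:
`∫₀^∞ x^s (φ(x) − Σ_{i<k} φ^{(i)}(0) x^i / i!) dx`. -/
noncomputable def xPlusPow (φ : ℝ → ℝ) (k : ℕ) (s : ℝ) : ℝ :=
  ∫ x in Set.Ioi (0:ℝ),
    x ^ s * (φ x - ∑ i ∈ Finset.range k, iteratedDeriv i φ 0 / (Nat.factorial i : ℝ) * x ^ i)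

/-- the meromorphic family `x₊^s` has a simple pole at `s = −k`
(`k = 1, 2, …`) with residue `(−1)^{k−1} δ₀^{(k−1)} / (k−1)!`; i.e. tested against a
test function `φ`, `(s+k)·⟨x₊^s, φ⟩` converges (as `s → −k` from within the strip
`(−k−1, −k)` where the defining formula holds) to
`(−1)^{k−1}/(k−1)! · ⟨δ₀^{(k−1)}, φ⟩ = (−1)^{k−1}/(k−1)! · (−1)^{k−1} φ^{(k−1)}(0)`. -/
theorem residue_xPlusPow (k : ℕ) (hk : 1 ≤ k) (φ : ℝ → ℝ)
    (hφ : ContDiff ℝ (⊤ : ℕ∞) φ) (hsupp : HasCompactSupport φ) :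
    Tendsto (fun s : ℝ => (s + (k:ℝ)) * xPlusPow φ k s)
      (nhdsWithin (-(k:ℝ)) (Set.Iio (-(k:ℝ))))
      (nhds ((-1:ℝ) ^ (k-1) / (Nat.factorial (k-1) : ℝ) *
        ((-1:ℝ) ^ (k-1) * iteratedDeriv (k-1) φ 0))) := by
  set l := nhdsWithin (-(k:ℝ)) (Set.Iio (-(k:ℝ))) with hl
  set S := Ioo (-(k:ℝ) - 2⁻¹) (-(k:ℝ)) with hSdef
  have hk1 : (1:ℝ) ≤ (k:ℝ) := by exact_mod_cast hk
  have hS : S ∈ l := by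
    rw [hSdef, ← Ioi_inter_Iio, hl]
    exact Filter.inter_mem (mem_nhdsWithin_of_mem_nhds (Ioi_mem_nhds (by linarith)))
      self_mem_nhdsWithin
  obtain ⟨CA, hCA⟩ := Abound hφ hsupp hk
  obtain ⟨CB, hCB⟩ := Bbound hφ hsupp
  have hkr : ((k-1 : ℕ) : ℝ) = (k:ℝ) - 1 := by rw [Nat.cast_sub hk, Nat.cast_one]
  have hks : k - 1 + 1 = k := Nat.succ_pred_eq_of_pos hk
  -- main identity on S
  have main_eq : ∀ s ∈ S, (s + (k:ℝ)) * xPlusPow φ k s =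
      (s + (k:ℝ)) * (∫ x in Ioc (0:ℝ) 1, x ^ s * tg φ k x)
      + (s + (k:ℝ)) * (∫ x in Ioi (1:ℝ), x ^ s * φ x)
      + (∑ i ∈ Finset.range (k-1), tc φ i * ((s + (k:ℝ)) / (s + (i:ℝ) + 1)) + tc φ (k-1)) := by
    intro s hs
    have hs2 : s < -(k:ℝ) := hs.2
    have hs0 : s ≤ 0 := by linarith
    have hxp : xPlusPow φ k s = ∫ x in Ioi (0:ℝ), x ^ s * tg φ k x := rfl
    have hpow_i : ∀ i ∈ Finset.range k, IntegrableOn (fun x : ℝ => x ^ s * x ^ i) (Ioi 1) :=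
      fun i hi => (powInt hs2 (Finset.mem_range.mp hi)).1
    have hfun : ∀ x : ℝ, x ^ s * tg φ k x
        = x ^ s * φ x - ∑ i ∈ Finset.range k, tc φ i * (x ^ s * x ^ i) := by
      intro x
      rw [tg, mul_sub, Finset.mul_sum]
      congr 1
      exact Finset.sum_congr rfl fun i _ => by ring
    have hsum_int : IntegrableOn
        (fun x : ℝ => ∑ i ∈ Finset.range k, tc φ i * (x ^ s * x ^ i)) (Ioi 1) :=
      integrable_finset_sum _ fun i hi => ((hpow_i i hi).const_mul _)
    have hBint := (hCB s hs0).1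
    have hIoi : IntegrableOn (fun x : ℝ => x ^ s * tg φ k x) (Ioi 1) := by
      simp only [hfun]
      exact hBint.sub hsum_int
    have hIoival : ∫ x in Ioi (1:ℝ), x ^ s * tg φ k x
        = (∫ x in Ioi (1:ℝ), x ^ s * φ x)
          - ∑ i ∈ Finset.range k, tc φ i * (-1 / (s + (i:ℝ) + 1)) := by
      simp only [hfun]
      rw [integral_sub hBint hsum_int, integral_finset_sum _
        (fun i hi => (hpow_i i hi).const_mul _)]
      congr 1
      refine Finset.sum_congr rfl fun i hi => ?_
      rw [MeasureTheory.integral_const_mul, (powInt hs2 (Finset.mem_range.mp hi)).2]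
    have hsplit : xPlusPow φ k s = (∫ x in Ioc (0:ℝ) 1, x ^ s * tg φ k x)
        + ∫ x in Ioi (1:ℝ), x ^ s * tg φ k x := by
      rw [hxp, show Ioi (0:ℝ) = Ioc 0 1 ∪ Ioi 1 from (Ioc_union_Ioi_eq_Ioi zero_le_one).symm,
        setIntegral_union Ioc_disjoint_Ioi_same measurableSet_Ioi (hCA s hs).1 hIoi]
    have h1 : (s + (k:ℝ)) * ∑ i ∈ Finset.range k, tc φ i * (-1 / (s + (i:ℝ) + 1))
        = ∑ i ∈ Finset.range k, -(tc φ i * ((s + (k:ℝ)) / (s + (i:ℝ) + 1))) := by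
      rw [Finset.mul_sum]
      exact Finset.sum_congr rfl fun i _ => by ring
    have hsum_split : ∑ i ∈ Finset.range k, tc φ i * ((s + (k:ℝ)) / (s + (i:ℝ) + 1))
        = (∑ i ∈ Finset.range (k-1), tc φ i * ((s + (k:ℝ)) / (s + (i:ℝ) + 1))) + tc φ (k-1) := by
      rw [← hks, Finset.sum_range_succ, hks]
      congr 1
      rw [hkr, show s + ((k:ℝ) - 1) + 1 = s + (k:ℝ) by ring,
        div_self (by linarith : s + (k:ℝ) ≠ 0), mul_one]
    calc (s + (k:ℝ)) * xPlusPow φ k s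
        = (s + (k:ℝ)) * (∫ x in Ioc (0:ℝ) 1, x ^ s * tg φ k x)
          + (s + (k:ℝ)) * (∫ x in Ioi (1:ℝ), x ^ s * φ x)
          - (s + (k:ℝ)) * ∑ i ∈ Finset.range k, tc φ i * (-1 / (s + (i:ℝ) + 1)) := by
          rw [hsplit, hIoival]; ring
      _ = _ := by
          rw [h1, Finset.sum_neg_distrib, sub_neg_eq_add, hsum_split]
  -- limits of the three pieces
  have habs : Tendsto (fun s : ℝ => |s + (k:ℝ)|) l (nhds 0) := by
    have h : Tendsto (fun s : ℝ => |s + (k:ℝ)|) (nhds (-(k:ℝ))) (nhds |(-(k:ℝ)) + (k:ℝ)|) :=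
      (continuous_abs.comp (continuous_id.add continuous_const)).tendsto _
    rw [neg_add_cancel, abs_zero] at h
    exact h.mono_left nhdsWithin_le_nhds
  have h1 : Tendsto (fun s : ℝ =>
      (s + (k:ℝ)) * ∫ x in Ioc (0:ℝ) 1, x ^ s * tg φ k x) l (nhds 0) := by
    refine squeeze_zero_norm' ?_ (by simpa using habs.mul_const CA)
    filter_upwards [hS] with s hs
    rw [Real.norm_eq_abs, abs_mul]
    exact mul_le_mul_of_nonneg_left (hCA s hs).2 (abs_nonneg _)
  have h2 : Tendsto (fun s : ℝ =>
      (s + (k:ℝ)) * ∫ x in Ioi (1:ℝ), x ^ s * φ x) l (nhds 0) := by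
    refine squeeze_zero_norm' ?_ (by simpa using habs.mul_const CB)
    filter_upwards [hS] with s hs
    rw [Real.norm_eq_abs, abs_mul]
    exact mul_le_mul_of_nonneg_left (hCB s (by linarith [hs.2])).2 (abs_nonneg _)
  have hnum : Tendsto (fun s : ℝ => s + (k:ℝ)) l (nhds 0) := by
    have h : Tendsto (fun s : ℝ => s + (k:ℝ)) (nhds (-(k:ℝ))) (nhds ((-(k:ℝ)) + (k:ℝ))) :=
      (continuous_id.add continuous_const).tendsto _
    rw [neg_add_cancel] at h
    exact h.mono_left nhdsWithin_le_nhds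
  have h3 : Tendsto (fun s : ℝ =>
      ∑ i ∈ Finset.range (k-1), tc φ i * ((s + (k:ℝ)) / (s + (i:ℝ) + 1)) + tc φ (k-1)) l
      (nhds (0 + tc φ (k-1))) := by
    refine Tendsto.add ?_ tendsto_const_nhds
    have : Tendsto (fun s : ℝ =>
        ∑ i ∈ Finset.range (k-1), tc φ i * ((s + (k:ℝ)) / (s + (i:ℝ) + 1))) l
        (nhds (∑ _i ∈ Finset.range (k-1), (0:ℝ))) := by
      refine tendsto_finset_sum _ fun i hi => ?_
      have hik : (i:ℝ) + 1 < (k:ℝ) := by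
        have hi' := Finset.mem_range.mp hi
        have : i + 1 < k := by omega
        exact_mod_cast this
      have hne : -(k:ℝ) + (i:ℝ) + 1 ≠ 0 := by intro h; linarith
      have hden : Tendsto (fun s : ℝ => s + (i:ℝ) + 1) l (nhds (-(k:ℝ) + (i:ℝ) + 1)) := by
        have h : Tendsto (fun s : ℝ => s + (i:ℝ) + 1) (nhds (-(k:ℝ)))
            (nhds ((-(k:ℝ)) + (i:ℝ) + 1)) :=
          ((continuous_id.add continuous_const).add continuous_const).tendsto _
        exact h.mono_left nhdsWithin_le_nhds
      have := (hnum.div hden hne).const_mul (tc φ i)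
      simpa using this
    simpa using this
  have final := ((h1.add h2).add h3).congr'
    (by filter_upwards [hS] with s hs; exact (main_eq s hs).symm)
  have hval : (-1:ℝ) ^ (k-1) / (Nat.factorial (k-1) : ℝ) *
      ((-1:ℝ) ^ (k-1) * iteratedDeriv (k-1) φ 0) = tc φ (k-1) := by
    have h4 : ((-1:ℝ)) ^ (k-1) * ((-1:ℝ)) ^ (k-1) = 1 := by
      rw [← mul_pow]; norm_num
    rw [tc, div_mul_eq_mul_div, ← mul_assoc, h4, one_mul]
  rw [hval]
  simpa using final
end

section
/- Let π : Y → X be a surjective submersion, σ ∈ C^∞(X) with 0 a regular value, and ω a smooth form on X ∖ σ⁻¹(0). If π*ω is (π*σ)-homogeneous of σ-degree δ on Y ∖ π⁻¹(σ⁻¹(0)), then ω is σ-homogeneous of σ-degree δ on X. -/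
/-- A (raw) `k`-form `ω` on `X ⊆ ℝ^N` is `σ`-homogeneous of `σ`-degree `δ ∈ ℝ/2ℤ`
if `ω = f(σ) ω'` on `X ∖ σ⁻¹(0)`, where `ω'` is a smooth form defined on all of `X`, and
`f ∈ C^∞(ℝ ∖ {0})` is homogeneous of degree `s` and either even (`ε = 0`) or odd
(`ε = 1`), with `s + ε ≡ δ (mod 2)`. -/
def SigmaHom (N k : ℕ) (X : Set (Fin N → ℝ)) (σ : (Fin N → ℝ) → ℝ) (δ : ℝ)
    (ω : (Fin N → ℝ) → (Fin k → (Fin N → ℝ)) → ℝ) : Prop :=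
  ∃ (f : ℝ → ℝ) (s : ℝ) (ε : ℕ) (ω' : (Fin N → ℝ) → (Fin k → (Fin N → ℝ)) → ℝ),
    ε ≤ 1 ∧
    (∀ x : ℝ, x ≠ 0 → ∀ c : ℝ, 0 < c → f (c * x) = c ^ s * f x) ∧
    (∀ x : ℝ, x ≠ 0 → f (-x) = (-1 : ℝ) ^ ε * f x) ∧
    ContDiffOn ℝ (⊤ : ℕ∞) (fun p : (Fin N → ℝ) × (Fin k → (Fin N → ℝ)) => ω' p.1 p.2)
      (X ×ˢ (Set.univ : Set (Fin k → (Fin N → ℝ)))) ∧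
    (∃ j : ℤ, s + (ε : ℝ) = δ + 2 * (j : ℝ)) ∧
    (∀ x ∈ X, σ x ≠ 0 → ∀ v, ω x v = f (σ x) * ω' x v)

open Filter Topology Set

private lemma exists_clm_rightInverse {A B : ℕ}
    (T : (Fin A → ℝ) →L[ℝ] (Fin B → ℝ)) (hT : Function.Surjective T) :
    ∃ R : (Fin B → ℝ) →L[ℝ] (Fin A → ℝ), ∀ u, T (R u) = u := by
  obtain ⟨g, hg⟩ := (T : (Fin A → ℝ) →ₗ[ℝ] (Fin B → ℝ)).exists_rightInverse_of_surjective
    (LinearMap.range_eq_top.2 hT)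
  refine ⟨LinearMap.toContinuousLinearMap g, fun u => ?_⟩
  have := LinearMap.ext_iff.1 hg u
  simpa using this

private lemma exists_section {A B : ℕ} {Y : Set (Fin A → ℝ)} (hY : IsOpen Y)
    {f : (Fin A → ℝ) → (Fin B → ℝ)} (hf : ContDiffOn ℝ (⊤ : ℕ∞) f Y)
    (hsub : ∀ y ∈ Y, Function.Surjective (fderiv ℝ f y))
    {y₀ : Fin A → ℝ} (hy₀ : y₀ ∈ Y) :
    ∃ s : (Fin B → ℝ) → (Fin A → ℝ), ContDiffAt ℝ (⊤ : ℕ∞) s (f y₀) ∧ s (f y₀) = y₀ ∧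
      ∀ᶠ x in 𝓝 (f y₀), s x ∈ Y ∧ f (s x) = x ∧ DifferentiableAt ℝ s x ∧
        ∀ u, fderiv ℝ f (s x) (fderiv ℝ s x u) = u := by
  obtain ⟨R, hR⟩ := exists_clm_rightInverse (fderiv ℝ f y₀) (hsub y₀ hy₀)
  set h : (Fin B → ℝ) → (Fin A → ℝ) := fun u => y₀ + R u with hh_def
  have hh : ContDiff ℝ (⊤ : ℕ∞) h := contDiff_const.add R.contDiff
  have hh0 : h 0 = y₀ := by simp [hh_def]
  have hfy₀ : ContDiffAt ℝ (⊤ : ℕ∞) f y₀ := hf.contDiffAt (hY.mem_nhds hy₀)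
  have hF : ContDiffAt ℝ (⊤ : ℕ∞) (f ∘ h) 0 := by
    refine ContDiffAt.comp 0 ?_ hh.contDiffAt
    rw [hh0]; exact hfy₀
  have hfd : HasFDerivAt f (fderiv ℝ f y₀) y₀ := (hfy₀.differentiableAt (by simp)).hasFDerivAt
  have hhd : HasFDerivAt h (R : (Fin B → ℝ) →L[ℝ] (Fin A → ℝ)) 0 := R.hasFDerivAt.const_add y₀
  have hFd : HasFDerivAt (f ∘ h)
      ((ContinuousLinearEquiv.refl ℝ (Fin B → ℝ) : (Fin B → ℝ) ≃L[ℝ] (Fin B → ℝ)) :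
        (Fin B → ℝ) →L[ℝ] (Fin B → ℝ)) 0 := by
    have hcomp : HasFDerivAt (f ∘ h) ((fderiv ℝ f y₀).comp R) 0 := by
      refine HasFDerivAt.comp 0 ?_ hhd
      rw [hh0]; exact hfd
    convert hcomp using 1
    ext u
    simp [hR u]
  set inv : (Fin B → ℝ) → (Fin B → ℝ) := hF.localInverse hFd (by simp) with hinv_def
  have hF0 : (f ∘ h) 0 = f y₀ := by simp [hh0]
  have hinv_smooth : ContDiffAt ℝ (⊤ : ℕ∞) inv (f y₀) := by
    rw [← hF0]; exact hF.to_localInverse hFd (by simp)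
  have hinv0 : inv (f y₀) = 0 := by
    rw [← hF0]; exact hF.localInverse_apply_image hFd (by simp)
  have hright : ∀ᶠ x in 𝓝 (f y₀), (f ∘ h) (inv x) = x := by
    rw [← hF0]
    exact (hF.hasStrictFDerivAt' hFd (by simp)).eventually_right_inverse
  refine ⟨h ∘ inv, ?_, ?_, ?_⟩
  · exact ContDiffAt.comp (f y₀) (by rw [hinv0]; exact hh.contDiffAt) hinv_smooth
  · simp [Function.comp, hinv0, hh0]
  · have hsmooth : ContDiffAt ℝ (⊤ : ℕ∞) (h ∘ inv) (f y₀) :=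
      ContDiffAt.comp (f y₀) (by rw [hinv0]; exact hh.contDiffAt) hinv_smooth
    have hdiff : ∀ᶠ x in 𝓝 (f y₀), DifferentiableAt ℝ (h ∘ inv) x := by
      have h1 : ContDiffAt ℝ 1 (h ∘ inv) (f y₀) := hsmooth.of_le (by simp)
      have := h1.eventually (by norm_num)
      exact this.mono fun z hz => hz.differentiableAt one_ne_zero
    have hmemY : ∀ᶠ x in 𝓝 (f y₀), (h ∘ inv) x ∈ Y := by
      have hc : ContinuousAt (h ∘ inv) (f y₀) := hsmooth.continuousAt
      have : (h ∘ inv) (f y₀) = y₀ := by simp [Function.comp, hinv0, hh0]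
      exact hc.preimage_mem_nhds (by rw [this]; exact hY.mem_nhds hy₀)
    have hkey : ∀ᶠ x in 𝓝 (f y₀), f ((h ∘ inv) x) = x ∧ (h ∘ inv) x ∈ Y
        ∧ DifferentiableAt ℝ (h ∘ inv) x := by
      filter_upwards [hright, hmemY, hdiff] with x h1 h2 h3
      exact ⟨h1, h2, h3⟩
    filter_upwards [hkey, hkey.eventually_nhds] with x hx hx'
    refine ⟨hx.2.1, hx.1, hx.2.2, fun u => ?_⟩
    have hcomp : fderiv ℝ (f ∘ (h ∘ inv)) x
        = (fderiv ℝ f ((h ∘ inv) x)).comp (fderiv ℝ (h ∘ inv) x) :=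
      fderiv_comp x ((hf.contDiffAt (hY.mem_nhds hx.2.1)).differentiableAt (by simp)) hx.2.2
    have hid : fderiv ℝ (f ∘ (h ∘ inv)) x = ContinuousLinearMap.id ℝ (Fin B → ℝ) := by
      have heq : (f ∘ (h ∘ inv)) =ᶠ[𝓝 x] id := hx'.mono fun z hz => hz.1
      rw [heq.fderiv_eq, fderiv_id]
    have := (hcomp.symm.trans hid)
    exact congrArg (fun T => T u) this

private lemma continuousAt_clm_apply' {Z E F : Type*} [TopologicalSpace Z]
    [NormedAddCommGroup E] [NormedSpace ℝ E] [NormedAddCommGroup F] [NormedSpace ℝ F]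
    {f : Z → E →L[ℝ] F} {g : Z → E} {x : Z}
    (hf : ContinuousAt f x) (hg : ContinuousAt g x) :
    ContinuousAt (fun y => f y (g y)) x :=
  (isBoundedBilinearMap_apply.continuous.continuousAt.comp (hf.prodMk hg) :)

private lemma descend_eq {A B k : ℕ} {Y : Set (Fin A → ℝ)} {X : Set (Fin B → ℝ)}
    (hY : IsOpen Y) (hX : IsOpen X)
    {f : (Fin A → ℝ) → (Fin B → ℝ)} (hf : ContDiffOn ℝ (⊤ : ℕ∞) f Y) (himg : f '' Y = X)
    (hsub : ∀ y ∈ Y, Function.Surjective (fderiv ℝ f y))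
    {σ : (Fin B → ℝ) → ℝ} (hσ : ContDiffOn ℝ (⊤ : ℕ∞) σ X)
    (hreg : ∀ x ∈ X, σ x = 0 → fderiv ℝ σ x ≠ 0)
    {ω : (Fin B → ℝ) → (Fin k → (Fin B → ℝ)) → ℝ}
    {g : ℝ → ℝ} {η : (Fin A → ℝ) → (Fin k → (Fin A → ℝ)) → ℝ}
    (hη : ContDiffOn ℝ (⊤ : ℕ∞) (fun p : (Fin A → ℝ) × (Fin k → (Fin A → ℝ)) => η p.1 p.2)
      (Y ×ˢ (Set.univ : Set (Fin k → (Fin A → ℝ)))))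
    (hid : ∀ y ∈ Y, σ (f y) ≠ 0 →
      ∀ w, ω (f y) (fun i => fderiv ℝ f y (w i)) = g (σ (f y)) * η y w)
    (hgne : ∀ t : ℝ, t ≠ 0 → g t ≠ 0)
    {y₁ y₂ : Fin A → ℝ} (hy₁ : y₁ ∈ Y) (hy₂ : y₂ ∈ Y) (hf12 : f y₁ = f y₂)
    {w₁ w₂ : Fin k → (Fin A → ℝ)}
    (hw : ∀ i, fderiv ℝ f y₁ (w₁ i) = fderiv ℝ f y₂ (w₂ i)) :
    η y₁ w₁ = η y₂ w₂ := by
  by_cases hσx : σ (f y₁) ≠ 0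
  · have e₁ := hid y₁ hy₁ hσx w₁
    have e₂ := hid y₂ hy₂ (by rw [← hf12]; exact hσx) w₂
    have hfun : (fun i => fderiv ℝ f y₁ (w₁ i)) = fun i => fderiv ℝ f y₂ (w₂ i) := funext hw
    rw [hfun, hf12] at e₁
    exact mul_left_cancel₀ (hgne _ (by rw [← hf12]; exact hσx)) (e₁.symm.trans e₂)
  · push_neg at hσx
    have hxX : f y₁ ∈ X := himg ▸ ⟨y₁, hy₁, rfl⟩
    obtain ⟨s₁, hs₁cd, hs₁0, hs₁ev⟩ := exists_section hY hf hsub hy₁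
    obtain ⟨s₂, hs₂cd, hs₂0, hs₂ev⟩ := exists_section hY hf hsub hy₂
    rw [← hf12] at hs₂cd hs₂0 hs₂ev
    set x := f y₁ with hxdef
    set v : Fin k → (Fin B → ℝ) := fun i => fderiv ℝ f y₁ (w₁ i) with hv
    set W₁ : (Fin B → ℝ) → Fin k → (Fin A → ℝ) :=
      fun z i => w₁ i - fderiv ℝ s₁ z (fderiv ℝ f (s₁ z) (w₁ i)) + fderiv ℝ s₁ z (v i) with hW₁
    set W₂ : (Fin B → ℝ) → Fin k → (Fin A → ℝ) :=
      fun z i => w₂ i - fderiv ℝ s₂ z (fderiv ℝ f (s₂ z) (w₂ i)) + fderiv ℝ s₂ z (v i) with hW₂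
    -- values at x
    have hW₁x : W₁ x = w₁ := by
      funext i
      simp only [hW₁, hs₁0, ← hv]
      abel
    have hW₂x : W₂ x = w₂ := by
      funext i
      have : v i = fderiv ℝ f y₂ (w₂ i) := hw i
      simp only [hW₂, hs₂0, this]
      abel
    -- continuity of the two comparison functions at x
    have hdf : ContinuousOn (fderiv ℝ f) Y := (hf.fderiv_of_isOpen (m := (⊤ : ℕ∞)) hY (by simp)).continuousOn
    have hφC : ∀ (s' : (Fin B → ℝ) → (Fin A → ℝ)) (y' : Fin A → ℝ)
        (w' : Fin k → (Fin A → ℝ)), y' ∈ Y → ContDiffAt ℝ (⊤ : ℕ∞) s' x → s' x = y' →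
        ContinuousAt (fun z => η (s' z) (fun i =>
          w' i - fderiv ℝ s' z (fderiv ℝ f (s' z) (w' i)) + fderiv ℝ s' z (v i))) x := by
      intro s' y' w' hy' hscd hs0
      have hds : ContinuousAt (fderiv ℝ s') x := (hscd.fderiv_right (m := (⊤ : ℕ∞)) (by simp)).continuousAt
      have hsC : ContinuousAt s' x := hscd.continuousAt
      have hdfs : ContinuousAt (fun z => fderiv ℝ f (s' z)) x := by
        refine (hdf.continuousAt ?_).comp hsC
        rw [hs0]; exact hY.mem_nhds hy'
      have hWC : ContinuousAt (fun z => fun i =>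
          w' i - fderiv ℝ s' z (fderiv ℝ f (s' z) (w' i)) + fderiv ℝ s' z (v i)) x := by
        refine continuousAt_pi.2 fun i => ?_
        exact (continuousAt_const.sub
          (continuousAt_clm_apply' hds (continuousAt_clm_apply' hdfs continuousAt_const))).add
          (continuousAt_clm_apply' hds continuousAt_const)
      have hηC : ContinuousAt (fun p : (Fin A → ℝ) × (Fin k → (Fin A → ℝ)) => η p.1 p.2)
          (s' x, fun i => w' i - fderiv ℝ s' x (fderiv ℝ f (s' x) (w' i)) + fderiv ℝ s' x (v i)) := by
        refine hη.continuousOn.continuousAt ((hY.prod isOpen_univ).mem_nhds ⟨?_, trivial⟩)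
        rw [hs0]; exact hy'
      exact Filter.Tendsto.comp hηC (hsC.prodMk hWC)
    have hφ₁C : ContinuousAt (fun z => η (s₁ z) (W₁ z)) x := hφC s₁ y₁ w₁ hy₁ hs₁cd hs₁0
    have hφ₂C : ContinuousAt (fun z => η (s₂ z) (W₂ z)) x := hφC s₂ y₂ w₂ hy₂ hs₂cd hs₂0
    -- the nhdsWithin filter is nontrivial
    have hS : (𝓝[{z | σ z ≠ 0}] x).NeBot := by
      rw [← mem_closure_iff_nhdsWithin_neBot, mem_closure_iff_frequently]
      by_contra hfr
      have hev0 : ∀ᶠ z in 𝓝 x, σ z = 0 := by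
        rw [not_frequently] at hfr
        exact hfr.mono fun z hz => not_not.mp hz
      obtain ⟨d, hd⟩ : ∃ d, fderiv ℝ σ x d ≠ 0 := by
        by_contra hAll; push_neg at hAll
        exact hreg x hxX hσx (ContinuousLinearMap.ext hAll)
      have hσdiff : HasFDerivAt σ (fderiv ℝ σ x) x :=
        ((hσ.contDiffAt (hX.mem_nhds hxX)).differentiableAt (by simp)).hasFDerivAt
      have hline : HasDerivAt (fun t : ℝ => x + t • d) d 0 := by
        simpa using ((hasDerivAt_id (0:ℝ)).smul_const d).const_add x
      have hc : HasDerivAt (fun t : ℝ => σ (x + t • d)) (fderiv ℝ σ x d) 0 := by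
        have hl : HasFDerivAt σ (fderiv ℝ σ x) ((fun t : ℝ => x + t • d) 0) := by
          simpa using hσdiff
        exact hl.comp_hasDerivAt 0 hline
      have hlineC : Tendsto (fun t : ℝ => x + t • d) (𝓝 0) (𝓝 x) := by
        have : ContinuousAt (fun t : ℝ => x + t • d) 0 := by fun_prop
        simpa using this.tendsto
      have hc0 : (fun t : ℝ => σ (x + t • d)) =ᶠ[𝓝 (0:ℝ)] fun _ => (0:ℝ) :=
        hlineC.eventually hev0
      have hzero : HasDerivAt (fun _ : ℝ => (0:ℝ)) (fderiv ℝ σ x d) 0 :=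
        hc.congr_of_eventuallyEq hc0.symm
      exact hd (hzero.unique (hasDerivAt_const 0 0))
    -- the two functions agree on the punctured filter
    have hEq : ∀ᶠ z in 𝓝[{z | σ z ≠ 0}] x,
        η (s₁ z) (W₁ z) = η (s₂ z) (W₂ z) := by
      filter_upwards [eventually_nhdsWithin_of_eventually_nhds hs₁ev,
        eventually_nhdsWithin_of_eventually_nhds hs₂ev,
        eventually_mem_nhdsWithin] with z h1 h2 hz
      have hz' : σ z ≠ 0 := hz
      have e₁ := hid (s₁ z) h1.1 (by rw [h1.2.1]; exact hz') (W₁ z)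
      have e₂ := hid (s₂ z) h2.1 (by rw [h2.2.1]; exact hz') (W₂ z)
      have hd₁ : (fun i => fderiv ℝ f (s₁ z) (W₁ z i)) = v := by
        funext i
        simp only [hW₁, map_add, map_sub, h1.2.2.2]
        abel
      have hd₂ : (fun i => fderiv ℝ f (s₂ z) (W₂ z i)) = v := by
        funext i
        simp only [hW₂, map_add, map_sub, h2.2.2.2]
        abel
      rw [hd₁, h1.2.1] at e₁
      rw [hd₂, h2.2.1] at e₂
      exact mul_left_cancel₀ (hgne _ hz') (e₁.symm.trans e₂)
    have hT₁ : Tendsto (fun z => η (s₁ z) (W₁ z)) (𝓝[{z | σ z ≠ 0}] x) (𝓝 (η y₁ w₁)) := by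
      have := hφ₁C.tendsto
      rw [hW₁x, hs₁0] at this
      exact this.mono_left nhdsWithin_le_nhds
    have hT₂ : Tendsto (fun z => η (s₂ z) (W₂ z)) (𝓝[{z | σ z ≠ 0}] x) (𝓝 (η y₂ w₂)) := by
      have := hφ₂C.tendsto
      rw [hW₂x, hs₂0] at this
      exact this.mono_left nhdsWithin_le_nhds
    have hEq' : (fun z => η (s₁ z) (W₁ z)) =ᶠ[𝓝[{z | σ z ≠ 0}] x]
        (fun z => η (s₂ z) (W₂ z)) := hEq
    exact tendsto_nhds_unique hT₁ (hT₂.congr' hEq'.symm)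

/-- let `π : Y → X` be a smooth surjective submersion between open sets,
`σ` smooth on `X` with `0` a regular value, and `ω` a form on `X ∖ σ⁻¹(0)`.  If the
pullback `π*ω` (i.e. `y ↦ ω(π(y)) ∘ (dπ_y × ⋯ × dπ_y)`) is `(π*σ)`-homogeneous of
`σ`-degree `δ` on `Y`, then `ω` is `σ`-homogeneous of `σ`-degree `δ` on `X`. -/
theorem sigmaHom_of_pullback_sigmaHom (A B k : ℕ)
    (Y : Set (Fin A → ℝ)) (X : Set (Fin B → ℝ)) (hY : IsOpen Y) (hX : IsOpen X)
    (f : (Fin A → ℝ) → (Fin B → ℝ)) (hf : ContDiffOn ℝ (⊤ : ℕ∞) f Y)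
    (himg : f '' Y = X)
    (hsub : ∀ y ∈ Y, Function.Surjective (fderiv ℝ f y))
    (σ : (Fin B → ℝ) → ℝ) (hσ : ContDiffOn ℝ (⊤ : ℕ∞) σ X)
    (hreg : ∀ x ∈ X, σ x = 0 → fderiv ℝ σ x ≠ 0)
    (δ : ℝ) (ω : (Fin B → ℝ) → (Fin k → (Fin B → ℝ)) → ℝ)
    (hpull : SigmaHom A k Y (fun y => σ (f y)) δ
      (fun y w => ω (f y) (fun i => fderiv ℝ f y (w i)))) :
    SigmaHom B k X σ δ ω := by
  classical
  obtain ⟨g, sdeg, ε, η, hε, hgpos, hgneg, hη, hj, hid⟩ := hpull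
  by_cases hg1 : g 1 = 0
  · -- the homogeneous factor vanishes identically, so ω = 0 off σ = 0
    have hg0 : ∀ t : ℝ, t ≠ 0 → g t = 0 := by
      intro t ht
      rcases ht.lt_or_gt with htneg | htpos
      · have h1 : g (-t) = 0 := by
          have := hgpos 1 one_ne_zero (-t) (by linarith)
          simpa [hg1] using this
        have h2 := hgneg (-t) (neg_ne_zero.2 ht)
        rw [neg_neg] at h2
        rw [h2, h1, mul_zero]
      · have := hgpos 1 one_ne_zero t htpos
        simpa [hg1] using this
    refine ⟨g, sdeg, ε, fun _ _ => 0, hε, hgpos, hgneg, contDiffOn_const, hj, ?_⟩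
    intro x hx hσx v
    rw [← himg] at hx
    obtain ⟨y, hyY, rfl⟩ := hx
    choose w hw using fun i => hsub y hyY (v i)
    have hmain : ω (f y) (fun i => fderiv ℝ f y (w i)) = g (σ (f y)) * η y w :=
      hid y hyY hσx w
    have hfun : (fun i => fderiv ℝ f y (w i)) = v := funext hw
    rw [hfun] at hmain
    show ω (f y) v = g (σ (f y)) * 0
    rw [hmain, hg0 _ hσx]
    ring
  · -- the homogeneous factor is nowhere zero
    have hgne : ∀ t : ℝ, t ≠ 0 → g t ≠ 0 := by
      intro t ht
      have hpos : ∀ u : ℝ, 0 < u → g u ≠ 0 := by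
        intro u hu
        have := hgpos 1 one_ne_zero u hu
        rw [mul_one] at this
        rw [this]
        exact mul_ne_zero (Real.rpow_pos_of_pos hu sdeg).ne' hg1
      rcases ht.lt_or_gt with htneg | htpos
      · have h2 := hgneg (-t) (neg_ne_zero.2 ht)
        rw [neg_neg] at h2
        rw [h2]
        exact mul_ne_zero (pow_ne_zero _ (by norm_num)) (hpos (-t) (by linarith))
      · exact hpos t htpos
    have hsecx : ∀ x, x ∈ X → ∃ y, y ∈ Y ∧ f y = x := by
      intro x hx
      rw [← himg] at hx
      obtain ⟨y, hyY, hyx⟩ := hx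
      exact ⟨y, hyY, hyx⟩
    set yof : (Fin B → ℝ) → (Fin A → ℝ) :=
      fun x => if h : x ∈ X then (hsecx x h).choose else 0 with hyofdef
    have hyofY : ∀ x ∈ X, yof x ∈ Y := by
      intro x hx
      simp only [hyofdef, dif_pos hx]
      exact (hsecx x hx).choose_spec.1
    have hfyof : ∀ x ∈ X, f (yof x) = x := by
      intro x hx
      simp only [hyofdef, dif_pos hx]
      exact (hsecx x hx).choose_spec.2
    set Rof : (Fin B → ℝ) → ((Fin B → ℝ) →L[ℝ] (Fin A → ℝ)) :=
      fun x => if h : x ∈ X then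
        (exists_clm_rightInverse (fderiv ℝ f (yof x)) (hsub _ (hyofY x h))).choose else 0
      with hRofdef
    have hRof : ∀ x ∈ X, ∀ u, fderiv ℝ f (yof x) (Rof x u) = u := by
      intro x hx u
      simp only [hRofdef, dif_pos hx]
      exact (exists_clm_rightInverse (fderiv ℝ f (yof x)) (hsub _ (hyofY x hx))).choose_spec u
    set ω' : (Fin B → ℝ) → (Fin k → (Fin B → ℝ)) → ℝ :=
      fun x v => if h : x ∈ X then η (yof x) (fun i => Rof x (v i)) else 0 with hω'def
    have key := fun {y₁ y₂ : Fin A → ℝ} (hy₁ : y₁ ∈ Y) (hy₂ : y₂ ∈ Y) (hf12 : f y₁ = f y₂)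
        {w₁ w₂ : Fin k → (Fin A → ℝ)}
        (hw : ∀ i, fderiv ℝ f y₁ (w₁ i) = fderiv ℝ f y₂ (w₂ i)) =>
      descend_eq hY hX hf himg hsub hσ hreg hη hid hgne hy₁ hy₂ hf12 hw
    refine ⟨g, sdeg, ε, ω', hε, hgpos, hgneg, ?_, hj, ?_⟩
    · -- smoothness of ω'
      rintro ⟨x₀, v₀⟩ ⟨hx₀, -⟩
      apply ContDiffAt.contDiffWithinAt
      have hy₀Y := hyofY x₀ hx₀
      obtain ⟨s, hscd, hs0, hsev⟩ := exists_section hY hf hsub hy₀Y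
      rw [hfyof x₀ hx₀] at hscd hs0 hsev
      have hdscd : ContDiffAt ℝ (⊤ : ℕ∞) (fderiv ℝ s) x₀ := hscd.fderiv_right (m := (⊤ : ℕ∞)) (by simp)
      have hinner : ContDiffAt ℝ (⊤ : ℕ∞) (fun q : (Fin B → ℝ) × (Fin k → (Fin B → ℝ)) =>
          ((s q.1, fun i => fderiv ℝ s q.1 (q.2 i)) :
            (Fin A → ℝ) × (Fin k → (Fin A → ℝ)))) (x₀, v₀) := by
        apply ContDiffAt.prodMk
        · exact ContDiffAt.comp _ hscd contDiffAt_fst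
        · apply contDiffAt_pi.2
          intro i
          refine ContDiffAt.clm_apply (ContDiffAt.comp _ hdscd contDiffAt_fst) ?_
          exact ((contDiff_apply ℝ (Fin B → ℝ) i).comp contDiff_snd).contDiffAt
      have houter : ContDiffAt ℝ (⊤ : ℕ∞) (fun q : (Fin A → ℝ) × (Fin k → (Fin A → ℝ)) => η q.1 q.2)
          ((s x₀ : Fin A → ℝ), (fun i => fderiv ℝ s x₀ (v₀ i))) := by
        refine hη.contDiffAt ((hY.prod isOpen_univ).mem_nhds ⟨?_, trivial⟩)
        rw [hs0]; exact hy₀Y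
      have hcand : ContDiffAt ℝ (⊤ : ℕ∞) (fun q : (Fin B → ℝ) × (Fin k → (Fin B → ℝ)) =>
          η (s q.1) (fun i => fderiv ℝ s q.1 (q.2 i))) (x₀, v₀) :=
        ContDiffAt.comp (g := fun q : (Fin A → ℝ) × (Fin k → (Fin A → ℝ)) => η q.1 q.2)
          (f := fun q : (Fin B → ℝ) × (Fin k → (Fin B → ℝ)) =>
            ((s q.1, fun i => fderiv ℝ s q.1 (q.2 i)) :
              (Fin A → ℝ) × (Fin k → (Fin A → ℝ)))) (x₀, v₀) houter hinner
      refine hcand.congr_of_eventuallyEq ?_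
      have hXev : ∀ᶠ q : (Fin B → ℝ) × (Fin k → (Fin B → ℝ)) in 𝓝 (x₀, v₀), q.1 ∈ X :=
        continuousAt_fst.eventually_mem (hX.mem_nhds hx₀)
      have hsev' : ∀ᶠ q : (Fin B → ℝ) × (Fin k → (Fin B → ℝ)) in 𝓝 (x₀, v₀),
          s q.1 ∈ Y ∧ f (s q.1) = q.1 ∧ DifferentiableAt ℝ s q.1 ∧
            ∀ u, fderiv ℝ f (s q.1) (fderiv ℝ s q.1 u) = u :=
        (continuousAt_fst (p := (x₀, v₀))).eventually hsev
      filter_upwards [hXev, hsev'] with q hq1 hq2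
      simp only [hω'def, dif_pos hq1]
      refine key (hyofY _ hq1) hq2.1 (by rw [hfyof _ hq1, hq2.2.1]) ?_
      intro i
      rw [hRof _ hq1, hq2.2.2.2]
    · -- the defining identity off σ = 0
      intro x hx hσx v
      have h1 : ω (f (yof x)) (fun i => fderiv ℝ f (yof x) (Rof x (v i)))
          = g (σ (f (yof x))) * η (yof x) (fun i => Rof x (v i)) :=
        hid (yof x) (hyofY x hx)
          (show σ (f (yof x)) ≠ 0 by rw [hfyof x hx]; exact hσx) (fun i => Rof x (v i))
      have h2 : (fun i => fderiv ℝ f (yof x) (Rof x (v i))) = v :=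
        funext fun i => hRof x hx (v i)
      rw [h2, hfyof x hx] at h1
      rw [hω'def]
      simp only [dif_pos hx]
      exact h1
end
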